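/- arXiv:2006.00125 — 6 statements merged into one kernel-verified Lean document; each statement's English description precedes it below -/
import Mathlib

section
/- Let A ∈ ℝ^{n×n}, B ∈ ℝ^{n×m}, and K ∈ ℝ^{m×n}. Then for every x ∈ ℝⁿ, ‖Π_{R(B)⊥} A x‖² = ‖(A − BK)x‖² − ‖Π_{R(B)}(A − BK)x‖² ≤ ‖(A − BK)x‖². Consequently, if there exists K with ‖A − BK‖ < 1 (operator norm), i.e., the pair (A,B) is contractible, then (A,B) is regularizable. -/
open Matrix

noncomputable section

/-- The Euclidean norm on `Fin n → ℝ`. -/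
def eucNorm {n : ℕ} (x : Fin n → ℝ) : ℝ := Real.sqrt (∑ i, (x i) ^ 2)

/-- `P` is the matrix of the orthogonal projection of `ℝⁿ` onto the subspace `V`:
the unique symmetric idempotent matrix whose range is `V`. -/
def IsProjMatrix {n : ℕ} (P : Matrix (Fin n) (Fin n) ℝ) (V : Submodule ℝ (Fin n → ℝ)) : Prop :=
  P.IsSymm ∧ P * P = P ∧ LinearMap.range P.mulVecLin = V

/-- A real square matrix is Schur stable if every complex eigenvalue has modulus `< 1`,
i.e. its spectral radius is `< 1`. -/
def SchurStable {n : ℕ} (M : Matrix (Fin n) (Fin n) ℝ) : Prop :=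
  ∀ (μ : ℂ) (v : Fin n → ℂ), v ≠ 0 →
    (M.map (algebraMap ℝ ℂ)).mulVec v = μ • v → ‖μ‖ < 1

/-- The operator norm of a matrix induced by the Euclidean vector norm:
`‖M‖ = sup {‖M u‖ : ‖u‖ = 1}`. -/
def l2OpNorm {n m : ℕ} (M : Matrix (Fin n) (Fin m) ℝ) : ℝ :=
  sSup {c | ∃ x : Fin m → ℝ, eucNorm x = 1 ∧ c = eucNorm (M.mulVec x)}

/-- The instability number of order `t` of `A`:
`M_t(A) = sup { ∏ i ‖A v i‖ : (v 1, …, v t) orthonormal in ℝⁿ }`. -/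
def instabilityNumber {n : ℕ} (A : Matrix (Fin n) (Fin n) ℝ) (t : ℕ) : ℝ :=
  sSup {c | ∃ v : Fin t → (Fin n → ℝ),
    (∀ i j, v i ⬝ᵥ v j = if i = j then 1 else 0) ∧ c = ∏ i, eucNorm (A.mulVec (v i))}

/-!
Since `P B = B`, the matrix `(1 - P) A` equals `(1 - P) (A - B K)` for every `K`, and Pythagoras
for the orthogonal projection `P` gives the identity; in particular `‖(1 - P) A x‖ ≤ ‖A - B K‖ ‖x‖`.
A real matrix `M` with `‖M x‖ ≤ c ‖x‖` on real vectors has all complex eigenvalues of modulus at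
most `c`: for an eigenpair `M v = μ v` the real and imaginary parts `a, b` of `v` satisfy
`‖M a‖² + ‖M b‖² = |μ|² (‖a‖² + ‖b‖²)`.
-/

section

variable {n m : ℕ}

lemma eucNorm_eq_norm_toLp (x : Fin n → ℝ) :
    eucNorm x = ‖(WithLp.toLp 2 x : EuclideanSpace ℝ (Fin n))‖ := by
  simp [eucNorm, EuclideanSpace.norm_eq]

lemma eucNorm_sq (x : Fin n → ℝ) : eucNorm x ^ 2 = x ⬝ᵥ x := by
  rw [eucNorm, Real.sq_sqrt (by positivity)]
  simp only [dotProduct, sq]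

lemma eucNorm_nonneg (x : Fin n → ℝ) : 0 ≤ eucNorm x := Real.sqrt_nonneg _

lemma eucNorm_eq_zero {x : Fin n → ℝ} : eucNorm x = 0 ↔ x = 0 := by
  simp [eucNorm_eq_norm_toLp]

lemma eucNorm_smul (t : ℝ) (x : Fin n → ℝ) : eucNorm (t • x) = |t| * eucNorm x := by
  simp [eucNorm_eq_norm_toLp, WithLp.toLp_smul, norm_smul]

lemma bddAbove_eucNorm_mulVec_sphere (M : Matrix (Fin n) (Fin m) ℝ) :
    BddAbove {c | ∃ x : Fin m → ℝ, eucNorm x = 1 ∧ c = eucNorm (M *ᵥ x)} := by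
  let L := LinearMap.toContinuousLinearMap (toLpLin 2 2 M)
  refine ⟨‖L‖, ?_⟩
  rintro _ ⟨x, hx, rfl⟩
  rw [eucNorm_eq_norm_toLp] at hx ⊢
  calc ‖(WithLp.toLp 2 (M *ᵥ x) : EuclideanSpace ℝ (Fin n))‖ = ‖L (WithLp.toLp 2 x)‖ := rfl
    _ ≤ ‖L‖ * ‖(WithLp.toLp 2 x : EuclideanSpace ℝ (Fin m))‖ := L.le_opNorm _
    _ = ‖L‖ := by rw [hx, mul_one]

lemma eucNorm_mulVec_le_l2OpNorm_mul (M : Matrix (Fin n) (Fin m) ℝ) (x : Fin m → ℝ) :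
    eucNorm (M *ᵥ x) ≤ l2OpNorm M * eucNorm x := by
  rcases eq_or_ne x 0 with rfl | hx
  · simp [eucNorm]
  have hpos : 0 < eucNorm x := (eucNorm_nonneg x).lt_of_ne' (eucNorm_eq_zero.not.mpr hx)
  have hunit : eucNorm ((eucNorm x)⁻¹ • x) = 1 := by
    rw [eucNorm_smul, abs_inv, abs_of_pos hpos, inv_mul_cancel₀ hpos.ne']
  have hle : eucNorm (M *ᵥ ((eucNorm x)⁻¹ • x)) ≤ l2OpNorm M :=
    le_csSup (bddAbove_eucNorm_mulVec_sphere M) ⟨_, hunit, rfl⟩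
  rw [mulVec_smul, eucNorm_smul, abs_inv, abs_of_pos hpos, inv_mul_le_iff₀ hpos] at hle
  linarith

lemma l2OpNorm_nonneg (M : Matrix (Fin n) (Fin m) ℝ) : 0 ≤ l2OpNorm M :=
  Real.sSup_nonneg <| by rintro _ ⟨x, -, rfl⟩; exact eucNorm_nonneg _

section Projection

variable {P : Matrix (Fin n) (Fin n) ℝ}

lemma dotProduct_mulVec_one_sub_mulVec_of_isSymm (hs : P.IsSymm) (hi : P * P = P)
    (y : Fin n → ℝ) : (P *ᵥ y) ⬝ᵥ ((1 - P) *ᵥ y) = 0 := by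
  rw [dotProduct_mulVec, ← mulVec_transpose, transpose_sub, transpose_one, hs.eq, mulVec_mulVec,
    sub_mul, one_mul, hi, sub_self, zero_mulVec, zero_dotProduct]

lemma eucNorm_sq_eq_add_of_isSymm (hs : P.IsSymm) (hi : P * P = P) (y : Fin n → ℝ) :
    eucNorm y ^ 2 = eucNorm (P *ᵥ y) ^ 2 + eucNorm ((1 - P) *ᵥ y) ^ 2 := by
  have hsplit : y = P *ᵥ y + (1 - P) *ᵥ y := by rw [← add_mulVec, add_sub_cancel, one_mulVec]
  have hcross := dotProduct_mulVec_one_sub_mulVec_of_isSymm hs hi y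
  rw [eucNorm_sq, eucNorm_sq, eucNorm_sq]
  conv_lhs => rw [hsplit]
  rw [add_dotProduct, dotProduct_add, dotProduct_add, dotProduct_comm ((1 - P) *ᵥ y), hcross]
  ring

variable {B : Matrix (Fin n) (Fin m) ℝ}

lemma IsProjMatrix.mul_eq_self (hP : IsProjMatrix P (LinearMap.range B.mulVecLin)) :
    P * B = B := by
  refine ext_iff_mulVec.mpr fun z => ?_
  obtain ⟨u, hu⟩ : B *ᵥ z ∈ LinearMap.range P.mulVecLin := hP.2.2 ▸ ⟨z, rfl⟩
  rw [← mulVec_mulVec, ← hu, mulVecLin_apply, mulVec_mulVec, hP.2.1]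

lemma IsProjMatrix.one_sub_mul_sub_mul (hP : IsProjMatrix P (LinearMap.range B.mulVecLin))
    (A : Matrix (Fin n) (Fin n) ℝ) (K : Matrix (Fin m) (Fin n) ℝ) :
    (1 - P) * (A - B * K) = (1 - P) * A := by
  rw [mul_sub, ← Matrix.mul_assoc, Matrix.sub_mul 1 P B, Matrix.one_mul, hP.mul_eq_self,
    sub_self, Matrix.zero_mul, sub_zero]

lemma IsProjMatrix.eucNorm_one_sub_mul_mulVec_sq
    (hP : IsProjMatrix P (LinearMap.range B.mulVecLin))
    (A : Matrix (Fin n) (Fin n) ℝ) (K : Matrix (Fin m) (Fin n) ℝ) (x : Fin n → ℝ) :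
    eucNorm (((1 - P) * A) *ᵥ x) ^ 2
      = eucNorm ((A - B * K) *ᵥ x) ^ 2 - eucNorm (P *ᵥ ((A - B * K) *ᵥ x)) ^ 2 := by
  rw [← hP.one_sub_mul_sub_mul A K, ← mulVec_mulVec,
    eucNorm_sq_eq_add_of_isSymm hP.1 hP.2.1 ((A - B * K) *ᵥ x)]
  ring

lemma IsProjMatrix.eucNorm_one_sub_mul_mulVec_le
    (hP : IsProjMatrix P (LinearMap.range B.mulVecLin))
    (A : Matrix (Fin n) (Fin n) ℝ) (K : Matrix (Fin m) (Fin n) ℝ) (x : Fin n → ℝ) :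
    eucNorm (((1 - P) * A) *ᵥ x) ≤ eucNorm ((A - B * K) *ᵥ x) := by
  rw [← pow_le_pow_iff_left₀ (eucNorm_nonneg _) (eucNorm_nonneg _) two_ne_zero,
    hP.eucNorm_one_sub_mul_mulVec_sq A K x, sub_le_self_iff]
  positivity

end Projection

section Eigenvalues

lemma re_map_mulVec (M : Matrix (Fin n) (Fin m) ℝ) (v : Fin m → ℂ) :
    (fun i => ((M.map (algebraMap ℝ ℂ) *ᵥ v) i).re) = M *ᵥ fun j => (v j).re := by
  funext i
  simp [mulVec, dotProduct, Complex.re_sum]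

lemma im_map_mulVec (M : Matrix (Fin n) (Fin m) ℝ) (v : Fin m → ℂ) :
    (fun i => ((M.map (algebraMap ℝ ℂ) *ᵥ v) i).im) = M *ᵥ fun j => (v j).im := by
  funext i
  simp [mulVec, dotProduct, Complex.im_sum]

variable {M : Matrix (Fin n) (Fin n) ℝ} {μ : ℂ} {v : Fin n → ℂ}

lemma mulVec_re_of_mulVec_eq_smul (hμ : (M.map (algebraMap ℝ ℂ)) *ᵥ v = μ • v) :
    M *ᵥ (fun i => (v i).re) = μ.re • (fun i => (v i).re) - μ.im • fun i => (v i).im := by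
  rw [← re_map_mulVec, hμ]
  funext i
  simp

lemma mulVec_im_of_mulVec_eq_smul (hμ : (M.map (algebraMap ℝ ℂ)) *ᵥ v = μ • v) :
    M *ᵥ (fun i => (v i).im) = μ.im • (fun i => (v i).re) + μ.re • fun i => (v i).im := by
  rw [← im_map_mulVec, hμ]
  funext i
  simp only [Pi.smul_apply, smul_eq_mul, Complex.mul_im, Pi.add_apply]
  ring

lemma eucNorm_mulVec_re_sq_add_im_sq (hμ : (M.map (algebraMap ℝ ℂ)) *ᵥ v = μ • v) :
    eucNorm (M *ᵥ fun i => (v i).re) ^ 2 + eucNorm (M *ᵥ fun i => (v i).im) ^ 2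
      = ‖μ‖ ^ 2 * (eucNorm (fun i => (v i).re) ^ 2 + eucNorm (fun i => (v i).im) ^ 2) := by
  rw [mulVec_re_of_mulVec_eq_smul hμ, mulVec_im_of_mulVec_eq_smul hμ, eucNorm_sq, eucNorm_sq,
    eucNorm_sq, eucNorm_sq, Complex.sq_norm, Complex.normSq_apply]
  simp only [sub_dotProduct, add_dotProduct, dotProduct_sub, dotProduct_add, smul_dotProduct,
    dotProduct_smul, smul_eq_mul, dotProduct_comm (fun i => (v i).im)]
  ring

lemma eucNorm_re_sq_add_im_sq_pos (hv : v ≠ 0) :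
    0 < eucNorm (fun i => (v i).re) ^ 2 + eucNorm (fun i => (v i).im) ^ 2 := by
  by_contra! h
  have hre : eucNorm (fun i => (v i).re) = 0 := by nlinarith [sq_nonneg (eucNorm fun i => (v i).im)]
  have him : eucNorm (fun i => (v i).im) = 0 := by nlinarith [sq_nonneg (eucNorm fun i => (v i).re)]
  exact hv <| funext fun i =>
    Complex.ext (congrFun (eucNorm_eq_zero.mp hre) i) (congrFun (eucNorm_eq_zero.mp him) i)

lemma schurStable_of_eucNorm_mulVec_le {c : ℝ} (hc₀ : 0 ≤ c) (hc : c < 1)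
    (hM : ∀ x, eucNorm (M *ᵥ x) ≤ c * eucNorm x) : SchurStable M := by
  intro μ v hv hμ
  have hsq (x : Fin n → ℝ) : eucNorm (M *ᵥ x) ^ 2 ≤ c ^ 2 * eucNorm x ^ 2 := by
    rw [← mul_pow]
    exact pow_le_pow_left₀ (eucNorm_nonneg _) (hM x) 2
  have hμc : ‖μ‖ ^ 2 ≤ c ^ 2 := by
    refine le_of_mul_le_mul_right ?_ (eucNorm_re_sq_add_im_sq_pos hv)
    rw [← eucNorm_mulVec_re_sq_add_im_sq hμ, mul_add]
    exact add_le_add (hsq _) (hsq _)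
  exact ((pow_le_pow_iff_left₀ (norm_nonneg μ) hc₀ two_ne_zero).mp hμc).trans_lt hc

end Eigenvalues

end

/-- A contractible pair is regularizable. -/
theorem stmt1 {n m : ℕ} (A : Matrix (Fin n) (Fin n) ℝ) (B : Matrix (Fin n) (Fin m) ℝ)
    (PB : Matrix (Fin n) (Fin n) ℝ)
    (hPB : IsProjMatrix PB (LinearMap.range B.mulVecLin))
    (K : Matrix (Fin m) (Fin n) ℝ) :
    (∀ x : Fin n → ℝ,
      eucNorm (((1 - PB) * A).mulVec x) ^ 2
          = eucNorm ((A - B * K).mulVec x) ^ 2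
            - eucNorm (PB.mulVec ((A - B * K).mulVec x)) ^ 2 ∧
      eucNorm (((1 - PB) * A).mulVec x) ^ 2 ≤ eucNorm ((A - B * K).mulVec x) ^ 2) ∧
    ((∃ K' : Matrix (Fin m) (Fin n) ℝ, l2OpNorm (A - B * K') < 1) →
      SchurStable ((1 - PB) * A)) := by
  refine ⟨fun x => ⟨hPB.eucNorm_one_sub_mul_mulVec_sq A K x, ?_⟩, ?_⟩
  · exact pow_le_pow_left₀ (eucNorm_nonneg _) (hPB.eucNorm_one_sub_mul_mulVec_le A K x) 2
  · rintro ⟨K', hK'⟩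
    exact schurStable_of_eucNorm_mulVec_le (l2OpNorm_nonneg _) hK' fun x =>
      (hPB.eucNorm_one_sub_mul_mulVec_le A K' x).trans (eucNorm_mulVec_le_l2OpNorm_mul _ x)
end
end

section
/- If the pair (A,B), with A ∈ ℝ^{n×n} and B ∈ ℝ^{n×m}, is regularizable, then the pair (A, B^⊤) is detectable in the PBH sense: there is no complex eigenpair (λ, v) of A (v ≠ 0, A v = λ v over ℂ) with |λ| ≥ 1 and B^⊤ v = 0. -/
/-! Since the projection `P` onto the range of `B` is symmetric and its range lies in that of `B`,
it factors as `P = Cᵀ * Bᵀ`; hence `Bᵀ v = 0` forces `P v = 0`, and an eigenvector `v` of `A` with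
`Bᵀ v = 0` is an eigenvector of `(1 - P) * A` for the same eigenvalue, which Schur stability
forbids when `1 ≤ ‖μ‖`. -/

open Matrix

noncomputable section

namespace Matrix

variable {ι κ ν R S : Type*}

theorem exists_mul_eq_of_range_mulVecLin_le [Fintype κ] [Fintype ν] [CommSemiring R]
    {P : Matrix ι ν R} {B : Matrix ι κ R}
    (h : LinearMap.range P.mulVecLin ≤ LinearMap.range B.mulVecLin) :
    ∃ C : Matrix κ ν R, B * C = P := by
  have hcol (j : ν) : P.col j ∈ LinearMap.range B.mulVecLin :=
    h <| P.range_mulVecLin ▸ Submodule.subset_span ⟨j, rfl⟩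
  choose w hw using hcol
  exact ⟨(of w)ᵀ, ext fun i j => congrFun (hw j) i⟩

theorem map_mulVec_eq_zero_of_isSymm [Fintype ι] [Fintype κ] [CommSemiring R] [CommSemiring S]
    (f : R →+* S) {P : Matrix ι ι R} {B : Matrix ι κ R} (hP : P.IsSymm)
    (h : LinearMap.range P.mulVecLin ≤ LinearMap.range B.mulVecLin) {v : ι → S}
    (hv : Bᵀ.map f *ᵥ v = 0) : P.map f *ᵥ v = 0 := by
  obtain ⟨C, rfl⟩ := exists_mul_eq_of_range_mulVecLin_le h
  rw [← hP.eq, transpose_mul, Matrix.map_mul, ← mulVec_mulVec, hv, mulVec_zero]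

theorem map_one_sub_mul_mulVec_of_mulVec_eq_zero [Fintype ι] [DecidableEq ι] [CommRing R]
    [CommRing S] (f : R →+* S) {P A : Matrix ι ι R} {v : ι → S} {μ : S}
    (hP : P.map f *ᵥ v = 0) (hA : A.map f *ᵥ v = μ • v) :
    ((1 - P) * A).map f *ᵥ v = μ • v := by
  change f.mapMatrix ((1 - P) * A) *ᵥ v = μ • v
  rw [map_mul, map_sub, map_one, ← mulVec_mulVec]
  change (1 - P.map f) *ᵥ (A.map f *ᵥ v) = μ • v
  rw [hA, mulVec_smul, sub_mulVec, one_mulVec, hP, sub_zero]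

end Matrix

/-- A regularizable pair `(A,B)` has `(A, Bᵀ)` detectable in the PBH sense. -/
theorem stmt3 {n m : ℕ} (A : Matrix (Fin n) (Fin n) ℝ) (B : Matrix (Fin n) (Fin m) ℝ)
    (PB : Matrix (Fin n) (Fin n) ℝ)
    (hPB : IsProjMatrix PB (LinearMap.range B.mulVecLin))
    (hreg : SchurStable ((1 - PB) * A)) :
    ¬ ∃ (μ : ℂ) (v : Fin n → ℂ), v ≠ 0 ∧
        (A.map (algebraMap ℝ ℂ)).mulVec v = μ • v ∧
        1 ≤ ‖μ‖ ∧
        (Bᵀ.map (algebraMap ℝ ℂ)).mulVec v = 0 := by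
  rintro ⟨μ, v, hv, hAv, hμ, hBv⟩
  obtain ⟨hsymm, -, hrange⟩ := hPB
  have hPv := map_mulVec_eq_zero_of_isSymm _ hsymm hrange.le hBv
  exact (hreg μ v hv (map_one_sub_mul_mulVec_of_mulVec_eq_zero _ hPv hAv)).not_ge hμ
end
end

section
/- Let A_1, …, A_N ∈ ℝ^{n×n}, let S ⊆ ℝⁿ be a linear subspace with orthogonal projection matrix Π_S, and suppose there exist symmetric positive definite matrices P_1, …, P_N ∈ ℝ^{n×n} and matrices G, H ∈ ℝ^{n×n} such that for every i = 1,…,N the 2n×2n block matrix [[G A_i + A_i^⊤ G^⊤ − P_i, A_i^⊤ H^⊤ − G], [H A_i − G^⊤, Π_S P_i Π_S − H − H^⊤]] is negative definite. Let B ∈ ℝ^{n×m} be such that for every i = 1,…,N the 2n×2n block matrix [[P_i, P_i Π_{R(B)⊥}], [Π_{R(B)⊥} P_i, Π_S P_i Π_S]] is positive semidefinite. Then for every A_α in the convex hull of {A_1, …, A_N} (i.e., A_α = Σ_i α_i A_i with α_i ∈ [0,1], Σ_i α_i = 1), the pair (A_α, B) is regularizable. -/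
open Matrix

noncomputable section

/-! Averaging the vertex conditions with the weights `α` gives the same two block-matrix
inequalities for `A_α` and `P_α = ∑ αᵢ Pᵢ`, because both block matrices are affine in `(Aᵢ, Pᵢ)`.
Evaluated at `(x, A_α x)`, the slack variables `G`, `H` cancel from the first one, leaving
`(A_α x)ᵀ Π_S P_α Π_S (A_α x) < xᵀ P_α x`; evaluated at `(-Π y, y)` with `Π = Π_{R(B)⊥}`, the second
one gives `(Π y)ᵀ P_α (Π y) ≤ yᵀ Π_S P_α Π_S y`. Hence `P_α` is a Lyapunov matrix for `Π A_α`,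
which is therefore Schur stable. -/

namespace Matrix

variable {R l m n o ι : Type*}

theorem sumElim_dotProduct_fromBlocks_mulVec [Fintype l] [Fintype m] [CommRing R]
    (A : Matrix l l R) (B : Matrix l m R) (C : Matrix m l R) (D : Matrix m m R)
    (x : l → R) (y : m → R) :
    Sum.elim x y ⬝ᵥ fromBlocks A B C D *ᵥ Sum.elim x y
      = x ⬝ᵥ A *ᵥ x + x ⬝ᵥ B *ᵥ y + y ⬝ᵥ C *ᵥ x + y ⬝ᵥ D *ᵥ y := by
  simp only [fromBlocks_mulVec, sumElim_dotProduct_sumElim, dotProduct_add, Sum.elim_comp_inl,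
    Sum.elim_comp_inr]
  ring

theorem sum_fromBlocks [AddCommMonoid R] (s : Finset ι) (A : ι → Matrix n l R)
    (B : ι → Matrix n m R) (C : ι → Matrix o l R) (D : ι → Matrix o m R) :
    ∑ i ∈ s, fromBlocks (A i) (B i) (C i) (D i)
      = fromBlocks (∑ i ∈ s, A i) (∑ i ∈ s, B i) (∑ i ∈ s, C i) (∑ i ∈ s, D i) := by
  ext (i | i) (j | j) <;> simp [sum_apply]

theorem posDef_sum_smul [Fintype ι] [Fintype n] {M : ι → Matrix n n ℝ}
    (hM : ∀ i, (M i).PosDef) {α : ι → ℝ} (hα0 : ∀ i, 0 ≤ α i) (hα1 : ∑ i, α i = 1) :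
    (∑ i, α i • M i).PosDef := by
  classical
  obtain ⟨i₀, -, hi₀⟩ : ∃ i ∈ Finset.univ, (0 : ι → ℝ) i < α i :=
    Finset.exists_lt_of_sum_lt (by simp [hα1])
  rw [← Finset.add_sum_erase _ _ (Finset.mem_univ i₀)]
  exact ((hM i₀).smul hi₀).add_posSemidef
    (posSemidef_sum _ fun i _ => (hM i).posSemidef.smul (hα0 i))

end Matrix

open Matrix

section

variable {n ι : Type*} [Fintype n]

def slackLMI (G H PiS A P : Matrix n n ℝ) : Matrix (n ⊕ n) (n ⊕ n) ℝ :=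
  fromBlocks (G * A + Aᵀ * Gᵀ - P) (Aᵀ * Hᵀ - G) (H * A - Gᵀ) (PiS * P * PiS - H - Hᵀ)

theorem sum_smul_slackLMI [Fintype ι] (G H PiS : Matrix n n ℝ) (A P : ι → Matrix n n ℝ)
    {α : ι → ℝ} (hα1 : ∑ i, α i = 1) :
    ∑ i, α i • slackLMI G H PiS (A i) (P i)
      = slackLMI G H PiS (∑ i, α i • A i) (∑ i, α i • P i) := by
  have hconst : ∀ X : Matrix n n ℝ, ∑ i, α i • X = X := fun X => by
    rw [← Finset.sum_smul, hα1, one_smul]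
  simp only [slackLMI, fromBlocks_smul, sum_fromBlocks, smul_sub, smul_add,
    Finset.sum_sub_distrib, Finset.sum_add_distrib, hconst, transpose_sum, transpose_smul,
    Finset.mul_sum, Finset.sum_mul, mul_smul_comm, smul_mul_assoc]

theorem dotProduct_slackLMI_mulVec (G H PiS A P : Matrix n n ℝ) (x : n → ℝ) :
    Sum.elim x (A *ᵥ x) ⬝ᵥ slackLMI G H PiS A P *ᵥ Sum.elim x (A *ᵥ x)
      = (A *ᵥ x) ⬝ᵥ (PiS * P * PiS) *ᵥ (A *ᵥ x) - x ⬝ᵥ P *ᵥ x := by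
  simp only [slackLMI, sumElim_dotProduct_fromBlocks_mulVec, add_mulVec, sub_mulVec,
    dotProduct_add, dotProduct_sub, ← mulVec_mulVec, dotProduct_mulVec _ Aᵀ,
    dotProduct_mulVec _ Gᵀ, dotProduct_mulVec _ Hᵀ, vecMul_transpose]
  ring

theorem quadForm_lt_of_posDef_neg_slackLMI {G H PiS A P : Matrix n n ℝ}
    (h : (-slackLMI G H PiS A P).PosDef) {x : n → ℝ} (hx : x ≠ 0) :
    (A *ᵥ x) ⬝ᵥ (PiS * P * PiS) *ᵥ (A *ᵥ x) < x ⬝ᵥ P *ᵥ x := by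
  have hz : Sum.elim x (A *ᵥ x) ≠ 0 := fun h0 => hx (funext fun j => congrFun h0 (Sum.inl j))
  have hneg := h.dotProduct_mulVec_pos hz
  rw [star_trivial, neg_mulVec, dotProduct_neg, dotProduct_slackLMI_mulVec] at hneg
  linarith

theorem quadForm_le_of_fromBlocks_posSemidef {P Q R : Matrix n n ℝ} (hQ : Qᵀ = Q)
    (h : (fromBlocks P (P * Q) (Q * P) R).PosSemidef) (w : n → ℝ) :
    (Q *ᵥ w) ⬝ᵥ P *ᵥ (Q *ᵥ w) ≤ w ⬝ᵥ R *ᵥ w := by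
  have hnonneg := h.dotProduct_mulVec_nonneg (Sum.elim (-(Q *ᵥ w)) w)
  have hw : w ᵥ* Q = Q *ᵥ w := by rw [← vecMul_transpose, hQ]
  simp only [star_trivial, sumElim_dotProduct_fromBlocks_mulVec, ← mulVec_mulVec, mulVec_neg,
    neg_dotProduct, dotProduct_neg, dotProduct_mulVec w Q, hw] at hnonneg
  linarith

theorem mulVec_re_im_of_map_mulVec_eq_smul {M : Matrix n n ℝ} {μ : ℂ} {v : n → ℂ}
    (h : M.map (algebraMap ℝ ℂ) *ᵥ v = μ • v) :
    M *ᵥ (fun j => (v j).re) = μ.re • (fun j => (v j).re) - μ.im • (fun j => (v j).im) ∧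
      M *ᵥ (fun j => (v j).im) = μ.im • (fun j => (v j).re) + μ.re • (fun j => (v j).im) := by
  have hj (j : n) : ∑ k, (M j k : ℂ) * v k = μ * v j := by
    simpa [mulVec, dotProduct] using congrFun h j
  constructor <;> funext j
  · simpa [mulVec, dotProduct, Complex.re_sum] using congrArg Complex.re (hj j)
  · simpa [mulVec, dotProduct, Complex.im_sum, add_comm] using congrArg Complex.im (hj j)

theorem dotProduct_mulVec_rotation (P : Matrix n n ℝ) (a b : n → ℝ) (c s : ℝ) :
    (c • a - s • b) ⬝ᵥ P *ᵥ (c • a - s • b) + (s • a + c • b) ⬝ᵥ P *ᵥ (s • a + c • b)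
      = (c ^ 2 + s ^ 2) * (a ⬝ᵥ P *ᵥ a + b ⬝ᵥ P *ᵥ b) := by
  simp only [mulVec_sub, mulVec_add, mulVec_smul, sub_dotProduct, dotProduct_sub, add_dotProduct,
    dotProduct_add, smul_dotProduct, dotProduct_smul, smul_eq_mul]
  ring

theorem schurStable_of_quadForm_lt {k : ℕ} {M P : Matrix (Fin k) (Fin k) ℝ} (hP : P.PosDef)
    (hMP : ∀ x ≠ 0, (M *ᵥ x) ⬝ᵥ P *ᵥ (M *ᵥ x) < x ⬝ᵥ P *ᵥ x) : SchurStable M := by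
  intro μ v hv hev
  set a : Fin k → ℝ := fun j => (v j).re
  set b : Fin k → ℝ := fun j => (v j).im
  obtain ⟨ha, hb⟩ := mulVec_re_im_of_map_mulVec_eq_smul hev
  have hMP_le : ∀ x, (M *ᵥ x) ⬝ᵥ P *ᵥ (M *ᵥ x) ≤ x ⬝ᵥ P *ᵥ x := fun x => by
    rcases eq_or_ne x 0 with rfl | hx
    · simp
    · exact (hMP x hx).le
  have hP_nonneg : ∀ x, 0 ≤ x ⬝ᵥ P *ᵥ x := fun x => by
    simpa using hP.posSemidef.dotProduct_mulVec_nonneg x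
  have hab : a ≠ 0 ∨ b ≠ 0 := by
    by_contra! h
    exact hv (funext fun j => Complex.ext (congrFun h.1 j) (congrFun h.2 j))
  -- On the plane spanned by `a = re v`, `b = im v`, `M` acts as `‖μ‖` times a rotation.
  have hdecay : (μ.re ^ 2 + μ.im ^ 2) * (a ⬝ᵥ P *ᵥ a + b ⬝ᵥ P *ᵥ b)
      < 1 * (a ⬝ᵥ P *ᵥ a + b ⬝ᵥ P *ᵥ b) := by
    rw [← dotProduct_mulVec_rotation, ← ha, ← hb, one_mul]
    rcases hab with h | h
    · exact add_lt_add_of_lt_of_le (hMP a h) (hMP_le b)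
    · exact add_lt_add_of_le_of_lt (hMP_le a) (hMP b h)
  have hμ := lt_of_mul_lt_mul_right hdecay (add_nonneg (hP_nonneg a) (hP_nonneg b))
  rw [← sq_lt_one_iff₀ (norm_nonneg μ), Complex.sq_norm, Complex.normSq_apply]
  nlinarith

end

theorem stmt8_general {n m N : ℕ} (A : Fin N → Matrix (Fin n) (Fin n) ℝ)
    (PiS : Matrix (Fin n) (Fin n) ℝ)
    (P : Fin N → Matrix (Fin n) (Fin n) ℝ) (hP : ∀ i, (P i).PosDef)
    (G H : Matrix (Fin n) (Fin n) ℝ)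
    (hLMI : ∀ i, (-(Matrix.fromBlocks
        (G * A i + (A i)ᵀ * Gᵀ - P i) ((A i)ᵀ * Hᵀ - G)
        (H * A i - Gᵀ) (PiS * P i * PiS - H - Hᵀ))).PosDef)
    (B : Matrix (Fin n) (Fin m) ℝ) (PB : Matrix (Fin n) (Fin n) ℝ)
    (hPB : IsProjMatrix PB (LinearMap.range B.mulVecLin))
    (hB : ∀ i, (Matrix.fromBlocks
        (P i) (P i * (1 - PB))
        ((1 - PB) * P i) (PiS * P i * PiS)).PosSemidef)
    (α : Fin N → ℝ) (hα0 : ∀ i, 0 ≤ α i) (hα1 : ∑ i, α i = 1) :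
    SchurStable ((1 - PB) * (∑ i, α i • A i)) := by
  set Aα := ∑ i, α i • A i
  set Pα := ∑ i, α i • P i
  have hQ : (1 - PB)ᵀ = 1 - PB := by rw [transpose_sub, transpose_one, hPB.1.eq]
  have hLMIα : (-slackLMI G H PiS Aα Pα).PosDef := by
    rw [← sum_smul_slackLMI G H PiS A P hα1, ← Finset.sum_neg_distrib]
    simp_rw [← smul_neg]
    exact posDef_sum_smul hLMI hα0 hα1
  have hBα : (fromBlocks Pα (Pα * (1 - PB)) ((1 - PB) * Pα) (PiS * Pα * PiS)).PosSemidef := by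
    have := posSemidef_sum Finset.univ fun i _ => (hB i).smul (hα0 i)
    simpa only [Pα, fromBlocks_smul, sum_fromBlocks, Finset.sum_mul, Finset.mul_sum, smul_mul_assoc,
      mul_smul_comm] using this
  refine schurStable_of_quadForm_lt (posDef_sum_smul hP hα0 hα1) fun x hx => ?_
  rw [← mulVec_mulVec]
  exact (quadForm_le_of_fromBlocks_posSemidef hQ hBα _).trans_lt
    (quadForm_lt_of_posDef_neg_slackLMI hLMIα hx)

/-- Robust regularizability of polytopic uncertain systems. -/
theorem stmt8 {n m N : ℕ} (A : Fin N → Matrix (Fin n) (Fin n) ℝ)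
    (S : Submodule ℝ (Fin n → ℝ)) (PiS : Matrix (Fin n) (Fin n) ℝ)
    (hPiS : IsProjMatrix PiS S)
    (P : Fin N → Matrix (Fin n) (Fin n) ℝ) (hP : ∀ i, (P i).PosDef)
    (G H : Matrix (Fin n) (Fin n) ℝ)
    (hLMI : ∀ i, (-(Matrix.fromBlocks
        (G * A i + (A i)ᵀ * Gᵀ - P i) ((A i)ᵀ * Hᵀ - G)
        (H * A i - Gᵀ) (PiS * P i * PiS - H - Hᵀ))).PosDef)
    (B : Matrix (Fin n) (Fin m) ℝ) (PB : Matrix (Fin n) (Fin n) ℝ)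
    (hPB : IsProjMatrix PB (LinearMap.range B.mulVecLin))
    (hB : ∀ i, (Matrix.fromBlocks
        (P i) (P i * (1 - PB))
        ((1 - PB) * P i) (PiS * P i * PiS)).PosSemidef)
    (α : Fin N → ℝ) (hα0 : ∀ i, 0 ≤ α i) (hα1 : ∑ i, α i = 1) :
    SchurStable ((1 - PB) * (∑ i, α i • A i)) :=
  stmt8_general A PiS P hP G H hLMI B PB hPB hB α hα0 hα1
end
end

section
/- Let A ∈ ℝ^{n×n}, B ∈ ℝ^{n×m}, and suppose there are k_1 + k_2 distinct complex numbers λ_1, …, λ_{k_1+k_2} and nonzero vectors u_1, …, u_{k_1+k_2} ∈ ℂⁿ with A u_ℓ = λ_ℓ u_ℓ for each ℓ (A viewed as a complex matrix), such that u_ℓ lies in the complexified column space of B for ℓ = 1, …, k_1 and u_ℓ lies in the complexification of R(B)^⊥ (i.e., B^⊤ u_ℓ = 0) for ℓ = k_1+1, …, k_1+k_2. Suppose x_0 ∈ ℝⁿ satisfies x_0 = Σ_{ℓ=1}^{k_1+k_2} β_ℓ u_ℓ with all β_ℓ ∈ ℂ nonzero. Let (x_t) be the DGR closed-loop trajectory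 with α = 0 started at x_0. Then for every r ≤ max{k_1, k_2}, the vectors x_0, x_1, …, x_{r−1} are linearly independent. -/
open Matrix

noncomputable section

/-!
Complexify and look at the span `W` of the excited modes `u ℓ`. Both `A` and `Π_{R(B)}` map `W`
into itself, and on `W` the projection `Π_{R(B)}` is the spectral projection onto the first `k₁`
modes, so it commutes with `A` there. Hence the trajectory stays in `W`, and its components
`Π_{R(B)} xₜ` and `(1 - Π_{R(B)}) xₜ` are trajectories of the fully corrected loop
`y_{t+1} = A (yₜ - zₜ)`, `zₜ ∈ span {y₀, …, y_{t-1}}`, excited by `k₁` and `k₂` modes respectively.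
For such a loop a dependence `y_s ∈ span {y₀, …, y_{s-1}}` makes that span `A`-invariant. An
invariant subspace containing a sum of eigenvectors for distinct eigenvalues contains each of
them, so its dimension, at most `s`, is at least the number of excited modes.
-/

open Function Submodule Module Finset

section PrefixSpan

variable {R M : Type*} [Semiring R] [AddCommMonoid M] [Module R M]

variable (R) in
/-- `V_t = span {y₀, …, y_{t-1}}`. -/
def prefixSpan (y : ℕ → M) (t : ℕ) : Submodule R M :=
  span R (Set.range fun i : Fin t => y i)

lemma mem_prefixSpan {y : ℕ → M} {i t : ℕ} (h : i < t) : y i ∈ prefixSpan R y t :=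
  subset_span ⟨⟨i, h⟩, rfl⟩

lemma prefixSpan_le {y : ℕ → M} {N : Submodule R M} {t : ℕ} (h : ∀ i < t, y i ∈ N) :
    prefixSpan R y t ≤ N :=
  span_le.2 <| Set.range_subset_iff.2 fun i => h i i.isLt

lemma prefixSpan_zero (y : ℕ → M) : prefixSpan R y 0 = ⊥ := by
  simp [prefixSpan]

lemma prefixSpan_succ (y : ℕ → M) (t : ℕ) :
    prefixSpan R y (t + 1) = R ∙ y t ⊔ prefixSpan R y t := by
  rw [prefixSpan, prefixSpan, ← span_insert]
  congr 1
  ext v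
  simp [Fin.exists_fin_succ', or_comm, eq_comm]

lemma prefixSpan_le_succ (y : ℕ → M) (t : ℕ) : prefixSpan R y t ≤ prefixSpan R y (t + 1) :=
  (prefixSpan_succ (R := R) y t).symm ▸ le_sup_right

lemma map_prefixSpan {M' : Type*} [AddCommMonoid M'] [Module R M'] (g : M →ₗ[R] M')
    (y : ℕ → M) (t : ℕ) : (prefixSpan R y t).map g = prefixSpan R (g ∘ y) t := by
  rw [prefixSpan, map_span, ← Set.range_comp]
  rfl

lemma apply_mem_span_range {ι : Type*} {g : End R M} {u : ι → M}
    (hg : ∀ i, g (u i) ∈ span R (Set.range u)) :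
    ∀ w ∈ span R (Set.range u), g w ∈ span R (Set.range u) := fun _ hw =>
  (span_le (p := (span R (Set.range u)).comap g)).2 (Set.range_subset_iff.2 hg) hw

end PrefixSpan

lemma algebraMap_comp_mem_prefixSpan {R S ι : Type*} [CommSemiring R] [Semiring S] [Algebra R S]
    {x : ℕ → ι → R} {t : ℕ} {v : ι → R} (hv : v ∈ prefixSpan R x t) :
    algebraMap R S ∘ v ∈ prefixSpan S (fun s => algebraMap R S ∘ x s) t := by
  have := mem_map_of_mem (f := (Algebra.linearMap R S).compLeft ι) hv
  rw [map_prefixSpan] at this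
  exact span_le_restrictScalars R S _ this

lemma linearIndependent_of_forall_notMem_prefixSpan {K M : Type*} [DivisionRing K]
    [AddCommGroup M] [Module K M] {y : ℕ → M} {N : ℕ} (h : ∀ s < N, y s ∉ prefixSpan K y s) :
    ∀ r ≤ N, LinearIndependent K fun i : Fin r => y i
  | 0, _ => linearIndependent_empty_type
  | r + 1, hr => by
    have hsnoc : (fun i : Fin (r + 1) => y i) = Fin.snoc (fun i : Fin r => y i) (y r) := by
      funext i
      refine Fin.lastCases ?_ (fun j => ?_) i <;> simp
    rw [hsnoc, linearIndependent_finSnoc]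
    exact ⟨linearIndependent_of_forall_notMem_prefixSpan h r (by omega), h r (by omega)⟩

lemma mem_of_sum_mem_of_mem_eigenspace {K M ι : Type*} [Field K] [AddCommGroup M] [Module K M]
    [DecidableEq ι] {f : End K M} {N : Submodule K M} (hN : ∀ w ∈ N, f w ∈ N) {lam : ι → K}
    (hlam : Injective lam) {v : ι → M} (hv : ∀ i, v i ∈ f.eigenspace (lam i)) (s : Finset ι)
    (hsum : ∑ i ∈ s, v i ∈ N) : ∀ i ∈ s, v i ∈ N := by
  induction s using Finset.induction_on generalizing v with
  | empty => simp
  | @insert a s ha ih =>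
    -- `f - lam a` kills the `a`-component and rescales the others by `lam i - lam a ≠ 0`
    have hshift : ∑ i ∈ s, (lam i - lam a) • v i ∈ N := by
      have hv' : ∀ i, f (v i) = lam i • v i := fun i => Module.End.mem_eigenspace_iff.1 (hv i)
      have key : f (∑ i ∈ insert a s, v i) - lam a • ∑ i ∈ insert a s, v i
          = ∑ i ∈ s, (lam i - lam a) • v i := by
        rw [Finset.sum_insert ha, map_add, map_sum, hv', smul_add, Finset.smul_sum]
        simp only [hv', sub_smul, Finset.sum_sub_distrib]
        abel
      exact key ▸ N.sub_mem (hN _ hsum) (N.smul_mem _ hsum)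
    have hs : ∀ i ∈ s, v i ∈ N := by
      intro i hi
      have hne : lam i - lam a ≠ 0 := sub_ne_zero.2 fun h => ha (hlam h ▸ hi)
      exact (N.smul_mem_iff hne).1 <|
        ih (v := fun i => (lam i - lam a) • v i) (fun i => (f.eigenspace _).smul_mem _ (hv i))
          hshift i hi
    intro i hi
    rcases Finset.mem_insert.1 hi with rfl | hi
    · rw [Finset.sum_insert ha] at hsum
      simpa using N.sub_mem hsum (N.sum_mem hs)
    · exact hs i hi

section ClosedLoop

variable {R M : Type*} [Ring R] [AddCommGroup M] [Module R M]

/-- `ξ_{t+1} = f ξ_t - P f z_t` with `z_t ∈ V_t`: the DGR loop with `α = 0`, where `z_t` plays the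
role of `Π_{V_t} ξ_t`. -/
def IsClosedLoopTrajectory (f P : End R M) (ξ : ℕ → M) : Prop :=
  ∀ t, ∃ z ∈ prefixSpan R ξ t, ξ (t + 1) = f (ξ t) - P (f z)

lemma IsClosedLoopTrajectory.of_zero {f P : End R M} {ξ : ℕ → M}
    (hξ : IsClosedLoopTrajectory f 0 ξ) : IsClosedLoopTrajectory f P ξ := fun t => by
  obtain ⟨_, _, h⟩ := hξ t
  exact ⟨0, zero_mem _, by simpa using h⟩

lemma IsClosedLoopTrajectory.mem_of_invariant {f P : End R M} {ξ : ℕ → M}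
    (hξ : IsClosedLoopTrajectory f P ξ) {W : Submodule R M} (hf : ∀ w ∈ W, f w ∈ W)
    (hP : ∀ w ∈ W, P w ∈ W) (h0 : ξ 0 ∈ W) : ∀ t, ξ t ∈ W := by
  intro t
  induction t using Nat.strong_induction_on with
  | _ t ih =>
    rcases t with _ | t
    · exact h0
    obtain ⟨z, hz, hstep⟩ := hξ t
    have hzW : z ∈ W := prefixSpan_le (fun i hi => ih i (by omega)) hz
    rw [hstep]
    exact W.sub_mem (hf _ (ih t (by omega))) (hP _ (hf _ hzW))

lemma IsClosedLoopTrajectory.comp {M' : Type*} [AddCommGroup M'] [Module R M']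
    {f P : End R M} {ξ : ℕ → M} (hξ : IsClosedLoopTrajectory f P ξ) {W : Submodule R M}
    (hξW : ∀ t, ξ t ∈ W) {f' P' : End R M'} (g : M →ₗ[R] M')
    (hgf : ∀ w ∈ W, g (f w) = f' (g w)) (hgP : ∀ w ∈ W, g (P (f w)) = P' (f' (g w))) :
    IsClosedLoopTrajectory f' P' (g ∘ ξ) := fun t => by
  obtain ⟨z, hz, hstep⟩ := hξ t
  refine ⟨g z, map_prefixSpan g ξ t ▸ mem_map_of_mem hz, ?_⟩
  simp only [Function.comp_apply, hstep, map_sub, hgf _ (hξW t),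
    hgP _ (prefixSpan_le (fun i _ => hξW i) hz)]

lemma IsClosedLoopTrajectory.map_prefixSpan_le {f : End R M} {y : ℕ → M}
    (hy : IsClosedLoopTrajectory f 1 y) :
    ∀ t, ∀ w ∈ prefixSpan R y t, f w ∈ prefixSpan R y (t + 1)
  | 0, w, hw => by simp_all [prefixSpan_zero]
  | t + 1, w, hw => by
    obtain ⟨z, hz, hstep⟩ := hy t
    have hft : f (y t) ∈ prefixSpan R y (t + 2) := by
      have : f (y t) = y (t + 1) + f z := by rw [hstep]; simp
      exact this ▸ add_mem (mem_prefixSpan (by omega))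
        (prefixSpan_le_succ y _ (hy.map_prefixSpan_le t z hz))
    rw [prefixSpan_succ, Submodule.mem_sup] at hw
    obtain ⟨a, ha, b, hb, rfl⟩ := hw
    obtain ⟨c, rfl⟩ := mem_span_singleton.1 ha
    rw [map_add, map_smul]
    exact add_mem (smul_mem _ _ hft) (prefixSpan_le_succ y _ (hy.map_prefixSpan_le t b hb))

section Projection

variable {ι : Type*} {f P : End R M} {lam : ι → R} {u : ι → M}

lemma apply_mem_span_range_of_eq_smul (hfu : ∀ i, f (u i) = lam i • u i) :
    ∀ w ∈ span R (Set.range u), f w ∈ span R (Set.range u) :=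
  apply_mem_span_range fun i => hfu i ▸ smul_mem _ _ (subset_span (Set.mem_range_self i))

lemma apply_apply_comm_of_mem_span (hfu : ∀ i, f (u i) = lam i • u i)
    (hPu : ∀ i, P (u i) = u i ∨ P (u i) = 0) :
    ∀ w ∈ span R (Set.range u), P (f w) = f (P w) := fun _ hw =>
  LinearMap.eqOn_span' (f := P ∘ₗ f) (g := f ∘ₗ P) (Set.forall_mem_range.2 fun i => by
    rcases hPu i with h | h <;> simp [hfu, h]) hw

lemma apply_apply_self_of_mem_span (hPu : ∀ i, P (u i) = u i ∨ P (u i) = 0) :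
    ∀ w ∈ span R (Set.range u), P (P w) = P w := fun _ hw =>
  LinearMap.eqOn_span' (f := P ∘ₗ P) (g := P) (Set.forall_mem_range.2 fun i => by
    rcases hPu i with h | h <;> simp [h]) hw

lemma IsClosedLoopTrajectory.comp_proj_of_modes {ξ : ℕ → M}
    (hξ : IsClosedLoopTrajectory f P ξ) (hfu : ∀ i, f (u i) = lam i • u i)
    (hPu : ∀ i, P (u i) = u i ∨ P (u i) = 0) (hξW : ∀ t, ξ t ∈ span R (Set.range u)) :
    IsClosedLoopTrajectory f 1 (P ∘ ξ) := by
  have hfW := apply_mem_span_range_of_eq_smul hfu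
  refine hξ.comp hξW P (apply_apply_comm_of_mem_span hfu hPu) fun w hw => ?_
  rw [apply_apply_self_of_mem_span hPu _ (hfW w hw), apply_apply_comm_of_mem_span hfu hPu w hw]
  rfl

lemma IsClosedLoopTrajectory.comp_one_sub_proj_of_modes {ξ : ℕ → M}
    (hξ : IsClosedLoopTrajectory f P ξ) (hfu : ∀ i, f (u i) = lam i • u i)
    (hPu : ∀ i, P (u i) = u i ∨ P (u i) = 0) (hξW : ∀ t, ξ t ∈ span R (Set.range u)) :
    IsClosedLoopTrajectory f 1 (⇑(1 - P) ∘ ξ) := by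
  have hfW := apply_mem_span_range_of_eq_smul hfu
  refine IsClosedLoopTrajectory.of_zero <| hξ.comp (P' := 0) hξW (1 - P) (fun w hw => ?_)
    fun w hw => ?_
  · simp [apply_apply_comm_of_mem_span hfu hPu w hw]
  · simp [apply_apply_self_of_mem_span hPu _ (hfW w hw)]

lemma apply_sum_smul_eq [Fintype ι] {S : Finset ι} (hPS : ∀ i ∈ S, P (u i) = u i)
    (hPSc : ∀ i ∉ S, P (u i) = 0) (β : ι → R) :
    P (∑ i, β i • u i) = ∑ i : S, β i • u i := by
  rw [map_sum, sum_coe_sort S fun i => β i • u i,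
    ← sum_subset (subset_univ S) fun i _ hi => by rw [map_smul, hPSc i hi, smul_zero]]
  exact sum_congr rfl fun i hi => by rw [map_smul, hPS i hi]

end Projection

end ClosedLoop

section Modes

variable {K M ι : Type*} [Field K] [AddCommGroup M] [Module K M]

theorem IsClosedLoopTrajectory.linearIndependent_of_one [Fintype ι] {f : End K M} {lam : ι → K}
    (hlam : Injective lam) {u : ι → M} (hu : ∀ i, f.HasEigenvector (lam i) (u i))
    {β : ι → K} (hβ : ∀ i, β i ≠ 0) {y : ℕ → M} (hy : IsClosedLoopTrajectory f 1 y)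
    (hy0 : y 0 = ∑ i, β i • u i) :
    ∀ r ≤ Fintype.card ι, LinearIndependent K fun i : Fin r => y i := by
  classical
  refine linearIndependent_of_forall_notMem_prefixSpan fun s hs hdep => ?_
  set N := prefixSpan K y s
  have hsucc : prefixSpan K y (s + 1) = N := by
    rw [prefixSpan_succ, sup_eq_right.2 ((span_singleton_le_iff_mem _ _).2 hdep)]
  have hinv : ∀ w ∈ N, f w ∈ N := fun w hw => hsucc ▸ hy.map_prefixSpan_le s w hw
  have hy0N : y 0 ∈ N := hsucc ▸ mem_prefixSpan (Nat.succ_pos s)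
  have huN : ∀ i, u i ∈ N := fun i =>
    (N.smul_mem_iff (hβ i)).1 <| mem_of_sum_mem_of_mem_eigenspace hinv hlam
      (fun i => (f.eigenspace _).smul_mem _ (hu i).1) univ (hy0 ▸ hy0N) i (mem_univ i)
  have hcard : Fintype.card ι ≤ finrank K N := by
    rw [← finrank_span_eq_card (f.eigenvectors_linearIndependent' lam hlam u hu)]
    have : FiniteDimensional K N := FiniteDimensional.span_of_finite K (Set.finite_range _)
    exact Submodule.finrank_mono (span_le.2 (Set.range_subset_iff.2 huN))
  have hdim : finrank K N ≤ s := (finrank_range_le_card _).trans_eq (Fintype.card_fin s)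
  omega


theorem IsClosedLoopTrajectory.linearIndependent [Fintype ι] [DecidableEq ι] {f P : End K M}
    {lam : ι → K} (hlam : Injective lam) {u : ι → M} (hu : ∀ i, f.HasEigenvector (lam i) (u i))
    {S : Finset ι} (hPS : ∀ i ∈ S, P (u i) = u i) (hPSc : ∀ i ∉ S, P (u i) = 0)
    {β : ι → K} (hβ : ∀ i, β i ≠ 0) {ξ : ℕ → M} (hξ : IsClosedLoopTrajectory f P ξ)
    (hξ0 : ξ 0 = ∑ i, β i • u i) :
    ∀ r ≤ max #S #Sᶜ, LinearIndependent K fun i : Fin r => ξ i := by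
  have hfu : ∀ i, f (u i) = lam i • u i := fun i => (hu i).apply_eq_smul
  have hPu : ∀ i, P (u i) = u i ∨ P (u i) = 0 := fun i => (em (i ∈ S)).imp (hPS i) (hPSc i)
  have hu_mem : ∀ i, u i ∈ span K (Set.range u) := fun i => subset_span (Set.mem_range_self i)
  have hξW := hξ.mem_of_invariant (apply_mem_span_range_of_eq_smul hfu)
    (apply_mem_span_range fun i => by rcases hPu i with h | h <;> simp [h, hu_mem])
    (hξ0 ▸ sum_mem fun i _ => smul_mem _ _ (hu_mem i))
  have h1 : (P ∘ ξ) 0 = ∑ i : S, β i • u i := by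
    rw [Function.comp_apply, hξ0, apply_sum_smul_eq hPS hPSc]
  have h2 : (⇑(1 - P) ∘ ξ) 0 = ∑ i : ↥Sᶜ, β i • u i := by
    rw [Function.comp_apply, hξ0, apply_sum_smul_eq (P := 1 - P) (S := Sᶜ)
      (fun i hi => by simp [hPSc i (mem_compl.1 hi)])
      (fun i hi => by simp [hPS i (notMem_compl.1 hi)])]
  intro r hr
  rcases le_max_iff.1 hr with hr | hr
  · have := (hξ.comp_proj_of_modes hfu hPu hξW).linearIndependent_of_one
      (u := fun i : S => u i) (hlam.comp Subtype.val_injective) (fun i => hu i) (fun i => hβ i)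
      h1 r (by rwa [Fintype.card_coe])
    exact this.of_comp P
  · have := (hξ.comp_one_sub_proj_of_modes hfu hPu hξW).linearIndependent_of_one
      (u := fun i : ↥Sᶜ => u i) (hlam.comp Subtype.val_injective) (fun i => hu i)
      (fun i => hβ i) h2 r (by rwa [Fintype.card_coe])
    exact this.of_comp (1 - P)

end Modes

theorem Matrix.exists_eq_mul_of_range_mulVecLin_le {R l m n : Type*} [CommSemiring R]
    [Fintype m] [Fintype n] [DecidableEq n] {A : Matrix l n R} {B : Matrix l m R}
    (h : LinearMap.range A.mulVecLin ≤ LinearMap.range B.mulVecLin) :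
    ∃ C : Matrix m n R, A = B * C := by
  choose c hc using fun j => h ⟨Pi.single j 1, rfl⟩
  refine ⟨(Matrix.of c)ᵀ, Matrix.ext fun i j => ?_⟩
  have := congrFun (hc j) i
  simp only [Matrix.mulVecLin_apply, Matrix.mulVec_single_one, Matrix.col_apply] at this
  rw [Matrix.mul_apply, ← this]
  rfl

namespace IsProjMatrix

variable {n m : ℕ} {P : Matrix (Fin n) (Fin n) ℝ} {B : Matrix (Fin n) (Fin m) ℝ}

lemma mul_eq_self_s15 (hP : IsProjMatrix P (LinearMap.range B.mulVecLin)) : P * B = B := by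
  obtain ⟨D, hD⟩ := Matrix.exists_eq_mul_of_range_mulVecLin_le hP.2.2.ge
  rw [hD, ← Matrix.mul_assoc, hP.2.1]

lemma exists_eq_mul_transpose (hP : IsProjMatrix P (LinearMap.range B.mulVecLin)) :
    ∃ C : Matrix (Fin n) (Fin m) ℝ, P = C * Bᵀ := by
  obtain ⟨C, hC⟩ := Matrix.exists_eq_mul_of_range_mulVecLin_le hP.2.2.le
  exact ⟨Cᵀ, by rw [← hP.1.eq, hC, Matrix.transpose_mul]⟩

variable {S : Type*} [CommSemiring S] (f : ℝ →+* S)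

lemma map_mulVec_map_mulVec (hP : IsProjMatrix P (LinearMap.range B.mulVecLin))
    (w : Fin m → S) : P.map f *ᵥ (B.map f *ᵥ w) = B.map f *ᵥ w := by
  rw [Matrix.mulVec_mulVec, ← Matrix.map_mul, hP.mul_eq_self_s15]

lemma map_mulVec_eq_zero (hP : IsProjMatrix P (LinearMap.range B.mulVecLin)) {v : Fin n → S}
    (hv : Bᵀ.map f *ᵥ v = 0) : P.map f *ᵥ v = 0 := by
  obtain ⟨C, rfl⟩ := hP.exists_eq_mul_transpose
  rw [Matrix.map_mul, ← Matrix.mulVec_mulVec, hv, Matrix.mulVec_zero]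

end IsProjMatrix

lemma isClosedLoopTrajectory_of_range_le {R ι : Type*} [CommRing R] [Fintype ι]
    {A P : Matrix ι ι R} {x : ℕ → ι → R} {Q : ℕ → Matrix ι ι R}
    (hQ : ∀ t, LinearMap.range (Q t).mulVecLin ≤ prefixSpan R x t)
    (hdyn : ∀ t, x (t + 1) = A *ᵥ x t - (P * A) *ᵥ (Q t *ᵥ x t)) :
    IsClosedLoopTrajectory A.mulVecLin P.mulVecLin x := fun t =>
  ⟨Q t *ᵥ x t, hQ t ⟨x t, rfl⟩,
    by simp only [hdyn t, Matrix.mulVecLin_apply, Matrix.mulVec_mulVec, Matrix.mul_assoc]⟩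

lemma IsClosedLoopTrajectory.map_algebraMap {R S ι : Type*} [CommRing R] [CommRing S]
    [Algebra R S] [Fintype ι] {A P : Matrix ι ι R} {x : ℕ → ι → R}
    (hx : IsClosedLoopTrajectory A.mulVecLin P.mulVecLin x) :
    IsClosedLoopTrajectory (A.map (algebraMap R S)).mulVecLin (P.map (algebraMap R S)).mulVecLin
      fun t => algebraMap R S ∘ x t := fun t => by
  have hmap : ∀ (M : Matrix ι ι R) v, algebraMap R S ∘ (M *ᵥ v) = M.map (algebraMap R S) *ᵥ
      (algebraMap R S ∘ v) := fun M v => funext (RingHom.map_mulVec _ M v)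
  obtain ⟨z, hz, hstep⟩ := hx t
  refine ⟨algebraMap R S ∘ z, algebraMap_comp_mem_prefixSpan hz, ?_⟩
  simp only [Matrix.mulVecLin_apply] at hstep ⊢
  rw [hstep, ← hmap, ← hmap, ← hmap]
  exact funext fun i => map_sub (algebraMap R S) _ _

/-- Informativity of the DGR-generated data: linear independence of the first
`max{k₁,k₂}` states when `x₀` excites `k₁` modes in `R(B)` and `k₂` modes in `R(B)⊥`
corresponding to distinct eigenvalues. -/
theorem stmt15 {n m : ℕ} (A : Matrix (Fin n) (Fin n) ℝ) (B : Matrix (Fin n) (Fin m) ℝ)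
    (PB : Matrix (Fin n) (Fin n) ℝ)
    (hPB : IsProjMatrix PB (LinearMap.range B.mulVecLin))
    (k1 k2 : ℕ) (lam : Fin (k1 + k2) → ℂ) (hlam : Function.Injective lam)
    (u : Fin (k1 + k2) → (Fin n → ℂ)) (hu0 : ∀ ℓ, u ℓ ≠ 0)
    (heig : ∀ ℓ, (A.map (algebraMap ℝ ℂ)).mulVec (u ℓ) = lam ℓ • u ℓ)
    (huB : ∀ ℓ : Fin (k1 + k2), (ℓ : ℕ) < k1 →
      ∃ w : Fin m → ℂ, u ℓ = (B.map (algebraMap ℝ ℂ)).mulVec w)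
    (huBperp : ∀ ℓ : Fin (k1 + k2), k1 ≤ (ℓ : ℕ) →
      (Bᵀ.map (algebraMap ℝ ℂ)).mulVec (u ℓ) = 0)
    (β : Fin (k1 + k2) → ℂ) (hβ : ∀ ℓ, β ℓ ≠ 0)
    (x : ℕ → Fin n → ℝ)
    (hx0 : (fun j => (x 0 j : ℂ)) = ∑ ℓ, β ℓ • u ℓ)
    (Pv : ℕ → Matrix (Fin n) (Fin n) ℝ)
    (hPv : ∀ t, IsProjMatrix (Pv t)
      (Submodule.span ℝ (Set.range fun i : Fin t => x i.val)))
    (hdyn : ∀ t, x (t + 1) = A.mulVec (x t) - (PB * A).mulVec ((Pv t).mulVec (x t))) :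
    ∀ r ≤ max k1 k2, LinearIndependent ℝ (fun i : Fin r => x i.val) := by
  intro r hr
  set S : Finset (Fin (k1 + k2)) := {ℓ | (ℓ : ℕ) < k1}
  have hS : #S = k1 := by simp [S, Fin.card_filter_val_lt]
  have hSc : #Sᶜ = k2 := by rw [card_compl, Fintype.card_fin, hS]; omega
  have hξ := (isClosedLoopTrajectory_of_range_le (fun t => (hPv t).2.2.le) hdyn).map_algebraMap
    (S := ℂ)
  have hPS : ∀ ℓ ∈ S, (PB.map (algebraMap ℝ ℂ)).mulVecLin (u ℓ) = u ℓ := fun ℓ hℓ => by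
    obtain ⟨w, hw⟩ := huB ℓ (mem_filter.1 hℓ).2
    rw [Matrix.mulVecLin_apply, hw]
    exact hPB.map_mulVec_map_mulVec _ w
  have hPSc : ∀ ℓ ∉ S, (PB.map (algebraMap ℝ ℂ)).mulVecLin (u ℓ) = 0 := fun ℓ hℓ =>
    hPB.map_mulVec_eq_zero _ (huBperp ℓ (not_lt.1 fun h => hℓ (mem_filter.2 ⟨mem_univ ℓ, h⟩)))
  have := hξ.linearIndependent hlam (fun ℓ => ⟨Module.End.mem_eigenspace_iff.2 (heig ℓ), hu0 ℓ⟩)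
    hPS hPSc hβ hx0 r (by rwa [hS, hSc])
  exact linearIndependent_algebraMap_comp_iff.1 this
end
end

section
/- Let A ∈ ℝ^{n×n} be diagonalizable over ℂ with the column space of A contained in the column space of B ∈ ℝ^{n×m}. Suppose x_0 = Σ_{ℓ=1}^{k} β_ℓ u_ℓ where u_1, …, u_k ∈ ℂⁿ are eigenvectors of A with eigenvalues λ_1, …, λ_k and all β_ℓ ∈ ℂ are nonzero, and the u_ℓ are linearly independent. Let (x_t) be the DGR closed-loop trajectory with α = 0 started at x_0, and let r ≤ k be such that at least r of the eigenvalues λ_1, …, λ_k are pairwise distinct (i.e., the set {λ_1, …, λ_k} has at least r elements). Then x_0, x_1, …, x_{r−1} are linearly independent. -/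
/-!
Since `R(A) ⊆ R(B)`, the projection onto `R(B)` fixes `A y`, so the trajectory obeys
`x (t+1) = A (x t - Π_{V_t} x t)`. By induction `x t - A^t x 0` lies in the Krylov space
`span {x 0, …, A^(t-1) x 0}`, so the `x t` arise from the Krylov vectors by a unitriangular change
of basis, and it suffices that `x 0, …, A^(r-1) x 0` are independent. Expanding a relation
`∑ c i • A^i x 0 = 0` along the eigenvectors gives `∑ c i * λ_ℓ^i = 0` for every `ℓ`; as `r` of the
`λ_ℓ` are distinct, the Vandermonde determinant forces `c = 0`. Independence of the complexified
vectors over `ℂ` gives independence over `ℝ`.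
-/

open Matrix

noncomputable section

theorem IsProjMatrix.mulVec_mem {n : ℕ} {P : Matrix (Fin n) (Fin n) ℝ}
    {V : Submodule ℝ (Fin n → ℝ)} (hP : IsProjMatrix P V) (y : Fin n → ℝ) : P *ᵥ y ∈ V :=
  hP.2.2 ▸ LinearMap.mem_range_self P.mulVecLin y

theorem IsProjMatrix.mulVec_eq_self {n : ℕ} {P : Matrix (Fin n) (Fin n) ℝ}
    {V : Submodule ℝ (Fin n → ℝ)} (hP : IsProjMatrix P V) {y : Fin n → ℝ} (hy : y ∈ V) :
    P *ᵥ y = y := by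
  obtain ⟨z, rfl⟩ : y ∈ LinearMap.range P.mulVecLin := hP.2.2 ▸ hy
  simp only [mulVecLin_apply, mulVec_mulVec, hP.2.1]

section Krylov

open Submodule Set

variable {R V : Type*} [Ring R] [AddCommGroup V] [Module R V]

theorem mem_span_range_fin {y : ℕ → V} {s t : ℕ} (hst : s < t) :
    y s ∈ span R (range fun i : Fin t => y i) :=
  subset_span ⟨⟨s, hst⟩, rfl⟩

theorem span_range_fin_mono (y : ℕ → V) {s t : ℕ} (hst : s ≤ t) :
    span R (range fun i : Fin s => y i) ≤ span R (range fun i : Fin t => y i) :=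
  span_le.2 <| range_subset_iff.2 fun i => mem_span_range_fin (i.2.trans_le hst)

theorem span_range_fin_le_of_sub_mem {x y : ℕ → V} {t : ℕ}
    (hxy : ∀ s < t, x s - y s ∈ span R (range fun i : Fin s => y i)) :
    span R (range fun i : Fin t => x i) ≤ span R (range fun i : Fin t => y i) := by
  refine span_le.2 <| range_subset_iff.2 fun s => ?_
  have hs := span_range_fin_mono y s.2.le (hxy s s.2)
  simpa using add_mem hs (mem_span_range_fin (R := R) (y := y) s.2)

theorem sub_pow_apply_mem_span_of_eq_apply_sub (f : Module.End R V) {x p : ℕ → V}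
    (hp : ∀ t, p t ∈ span R (range fun i : Fin t => x i))
    (hx : ∀ t, x (t + 1) = f (x t - p t)) (t : ℕ) :
    x t - (f ^ t) (x 0) ∈ span R (range fun i : Fin t => (f ^ (i : ℕ)) (x 0)) := by
  induction t using Nat.strong_induction_on with
  | _ t ih =>
  cases t with
  | zero => simp
  | succ t =>
    set y : ℕ → V := fun i => (f ^ i) (x 0)
    have hmap : ∀ w ∈ span R (range fun i : Fin t => y i),
        f w ∈ span R (range fun i : Fin (t + 1) => y i) := by
      refine fun w hw => (map_span_le f _ _).2 ?_ (mem_map_of_mem hw)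
      rintro _ ⟨i, rfl⟩
      have hfy : f (y i) = y (i + 1) := by simp only [y, pow_succ', Module.End.mul_apply]
      exact hfy ▸ mem_span_range_fin (Nat.succ_lt_succ i.2)
    have hpt : p t ∈ span R (range fun i : Fin t => y i) :=
      span_range_fin_le_of_sub_mem (x := x) (y := y) (fun s hs => ih s (hs.trans t.lt_succ_self))
        (hp t)
    have hsucc : x (t + 1) - y (t + 1) = f (x t - y t - p t) := by
      simp only [hx, y, pow_succ', Module.End.mul_apply, map_sub]
      abel
    rw [hsucc]
    exact hmap _ (sub_mem (ih t t.lt_succ_self) hpt)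

theorem linearIndependent_of_sub_mem_span_range_fin {K : Type*} [DivisionRing K] [Module K V]
    {x y : ℕ → V} {r : ℕ} (hy : LinearIndependent K fun i : Fin r => y i)
    (hxy : ∀ t < r, x t - y t ∈ span K (range fun i : Fin t => y i)) :
    LinearIndependent K fun i : Fin r => x i := by
  induction r with
  | zero => exact linearIndependent_empty_type
  | succ r ih =>
    obtain ⟨hy_init, hy_last⟩ := linearIndependent_finSucc'.1 hy
    refine linearIndependent_finSucc'.2 ⟨ih hy_init fun t ht => hxy t (ht.trans r.lt_succ_self), ?_⟩
    intro hx_last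
    have hx : x r ∈ span K (range fun i : Fin r => y i) :=
      span_range_fin_le_of_sub_mem (fun s hs => hxy s (hs.trans r.lt_succ_self)) hx_last
    have hy_mem := sub_mem hx (hxy r r.lt_succ_self)
    rw [sub_sub_cancel] at hy_mem
    exact hy_last hy_mem

theorem Module.End.pow_apply_sum_smul_eigenvectors {K ι : Type*} [CommSemiring K] [Module K V]
    [Fintype ι] (f : Module.End K V) {lam : ι → K} {u : ι → V}
    (heig : ∀ ℓ, f (u ℓ) = lam ℓ • u ℓ) (β : ι → K) (i : ℕ) :
    (f ^ i) (∑ ℓ, β ℓ • u ℓ) = ∑ ℓ, (β ℓ * lam ℓ ^ i) • u ℓ := by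
  induction i with
  | zero => simp
  | succ i ih =>
    rw [pow_succ', Module.End.mul_apply, ih, map_sum]
    simp only [map_smul, heig, smul_smul, pow_succ, mul_assoc]

theorem Module.End.linearIndependent_pow_apply_sum_smul_eigenvectors {K ι : Type*} [CommRing K]
    [IsDomain K] [Module K V] [Fintype ι]
    (f : Module.End K V) {lam : ι → K} {u : ι → V} (hu : LinearIndependent K u)
    (heig : ∀ ℓ, f (u ℓ) = lam ℓ • u ℓ) {β : ι → K} (hβ : ∀ ℓ, β ℓ ≠ 0) {r : ℕ}
    (hr : r ≤ (range lam).ncard) :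
    LinearIndependent K fun i : Fin r => (f ^ (i : ℕ)) (∑ ℓ, β ℓ • u ℓ) := by
  obtain ⟨μ, hμ_inj, hμ_mem⟩ :
      ∃ μ : Fin r → K, Function.Injective μ ∧ ∀ j, μ j ∈ range lam := by
    let e : Fin r ↪ range lam := (Fin.castLEEmb (Nat.card_coe_set_eq (range lam) ▸ hr)).trans
      (Finite.equivFin _).symm.toEmbedding
    exact ⟨fun j => e j, Subtype.val_injective.comp e.injective, fun j => (e j).2⟩
  refine Fintype.linearIndependent_iff.2 fun c hc => ?_
  have hroots : ∀ ℓ, ∑ i : Fin r, c i * lam ℓ ^ (i : ℕ) = 0 := by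
    have hsum : ∑ ℓ, (β ℓ * ∑ i : Fin r, c i * lam ℓ ^ (i : ℕ)) • u ℓ = 0 := by
      rw [← hc]
      simp_rw [f.pow_apply_sum_smul_eigenvectors heig, Finset.smul_sum, smul_smul,
        Finset.mul_sum, Finset.sum_smul]
      rw [Finset.sum_comm]
      simp only [mul_left_comm]
    exact fun ℓ => (mul_eq_zero.1 (Fintype.linearIndependent_iff.1 hu _ hsum ℓ)).resolve_left (hβ ℓ)
  refine congrFun (Matrix.eq_zero_of_forall_index_sum_mul_pow_eq_zero hμ_inj fun j => ?_)
  obtain ⟨ℓ, hℓ⟩ := hμ_mem j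
  rw [← hℓ]
  exact hroots ℓ

end Krylov

theorem LinearIndependent.of_map_ofReal {ι n : Type*} {v : ι → n → ℝ}
    (h : LinearIndependent ℂ fun i j => (v i j : ℂ)) : LinearIndependent ℝ v :=
  .of_comp (Complex.ofRealAm.toLinearMap.compLeft n) (h.restrict_scalars' ℝ)

theorem Matrix.toLin'_map_ofReal_pow_apply {n : Type*} [Fintype n] [DecidableEq n]
    (A : Matrix n n ℝ) (i : ℕ) (v : n → ℝ) :
    (toLin' (A.map (algebraMap ℝ ℂ)) ^ i) (fun j => (v j : ℂ)) =
      fun j => ((toLin' A ^ i) v j : ℂ) := by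
  rw [← toLin'_pow, ← toLin'_pow, toLin'_apply, toLin'_apply, ← Matrix.map_pow]
  funext j
  exact (RingHom.map_mulVec (algebraMap ℝ ℂ) (A ^ i) v j).symm

theorem stmt16_general {n m : ℕ} (A : Matrix (Fin n) (Fin n) ℝ) (B : Matrix (Fin n) (Fin m) ℝ)
    (hcol : LinearMap.range A.mulVecLin ≤ LinearMap.range B.mulVecLin)
    (PB : Matrix (Fin n) (Fin n) ℝ)
    (hPB : IsProjMatrix PB (LinearMap.range B.mulVecLin))
    (k : ℕ) (lam : Fin k → ℂ) (u : Fin k → (Fin n → ℂ))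
    (hu : LinearIndependent ℂ u)
    (heig : ∀ ℓ, (A.map (algebraMap ℝ ℂ)).mulVec (u ℓ) = lam ℓ • u ℓ)
    (β : Fin k → ℂ) (hβ : ∀ ℓ, β ℓ ≠ 0)
    (x : ℕ → Fin n → ℝ)
    (hx0 : (fun j => (x 0 j : ℂ)) = ∑ ℓ, β ℓ • u ℓ)
    (Pv : ℕ → Matrix (Fin n) (Fin n) ℝ)
    (hPv : ∀ t, IsProjMatrix (Pv t)
      (Submodule.span ℝ (Set.range fun i : Fin t => x i.val)))
    (hdyn : ∀ t, x (t + 1) = A.mulVec (x t) - (PB * A).mulVec ((Pv t).mulVec (x t)))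
    (r : ℕ) (hcard : r ≤ (Set.range lam).ncard) :
    LinearIndependent ℝ (fun i : Fin r => x i.val) := by
  have hstep : ∀ t, x (t + 1) = toLin' A (x t - Pv t *ᵥ x t) := fun t => by
    rw [hdyn t, ← mulVec_mulVec, hPB.mulVec_eq_self (y := A *ᵥ _) (hcol ⟨_, rfl⟩), toLin'_apply,
      mulVec_sub]
  have hcomplex := Module.End.linearIndependent_pow_apply_sum_smul_eigenvectors
    (toLin' (A.map (algebraMap ℝ ℂ))) hu heig hβ hcard
  rw [← hx0] at hcomplex
  simp_rw [toLin'_map_ofReal_pow_apply] at hcomplex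
  exact linearIndependent_of_sub_mem_span_range_fin (y := fun i => (toLin' A ^ i) (x 0))
    (.of_map_ofReal hcomplex) fun t _ =>
      sub_pow_apply_mem_span_of_eq_apply_sub _ (fun t => (hPv t).mulVec_mem (x t)) hstep t

/-- Linear independence of DGR data when `A` is diagonalizable and `R(A) ⊆ R(B)`. -/
theorem stmt16 {n m : ℕ} (A : Matrix (Fin n) (Fin n) ℝ) (B : Matrix (Fin n) (Fin m) ℝ)
    (hdiag : ∃ P D : Matrix (Fin n) (Fin n) ℂ,
      IsUnit P.det ∧ D.IsDiag ∧ A.map (algebraMap ℝ ℂ) = P * D * P⁻¹)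
    (hcol : LinearMap.range A.mulVecLin ≤ LinearMap.range B.mulVecLin)
    (PB : Matrix (Fin n) (Fin n) ℝ)
    (hPB : IsProjMatrix PB (LinearMap.range B.mulVecLin))
    (k : ℕ) (lam : Fin k → ℂ) (u : Fin k → (Fin n → ℂ))
    (hu : LinearIndependent ℂ u)
    (heig : ∀ ℓ, (A.map (algebraMap ℝ ℂ)).mulVec (u ℓ) = lam ℓ • u ℓ)
    (β : Fin k → ℂ) (hβ : ∀ ℓ, β ℓ ≠ 0)
    (x : ℕ → Fin n → ℝ)
    (hx0 : (fun j => (x 0 j : ℂ)) = ∑ ℓ, β ℓ • u ℓ)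
    (Pv : ℕ → Matrix (Fin n) (Fin n) ℝ)
    (hPv : ∀ t, IsProjMatrix (Pv t)
      (Submodule.span ℝ (Set.range fun i : Fin t => x i.val)))
    (hdyn : ∀ t, x (t + 1) = A.mulVec (x t) - (PB * A).mulVec ((Pv t).mulVec (x t)))
    (r : ℕ) (hrk : r ≤ k) (hcard : r ≤ (Set.range lam).ncard) :
    LinearIndependent ℝ (fun i : Fin r => x i.val) :=
  stmt16_general A B hcol PB hPB k lam u hu heig β hβ x hx0 Pv hPv hdyn r hcard
end
end

section
/- Fix n ≥ 1 and λ_1, …, λ_n ∈ ℝ. Let A ∈ ℝ^{n×n} be the upper bidiagonal matrix with A_{ii} = λ_i for i = 1, …, n, A_{i,i+1} = 1 for i = 1, …, n−1, and all other entries zero, and let B = e_n (the n-th standard basis vector). Then for every input sequence u_0, u_1, … ∈ ℝ, the trajectory defined by x_0 = e_1 and x_{t+1} = A x_t + B u_t satisfies e_1^⊤ x_t = λ_1^t for all t with 0 ≤ t < n. In particular, no choice of inputs can prevent the first state coordinate from growing like λ_1^t during the first n−1 steps. -/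
open Matrix

noncomputable section

/-! The input enters only at coordinate `b` (the last one), and the superdiagonal of `A` moves
information one coordinate up per step, so coordinate `i > 0` stays zero up to time `b - i`. Hence
up to time `b` the first coordinate only sees itself and evolves as `x t 0 = λ₁ ^ t * x 0 0`. -/

section Bidiagonal

variable {n : ℕ} {lam : Fin n → ℝ} {A : Matrix (Fin n) (Fin n) ℝ}

theorem bidiagonal_mulVec_apply
    (hA : ∀ i j : Fin n,
      A i j = if j = i then lam i else if (j : ℕ) = (i : ℕ) + 1 then 1 else 0)
    {v : Fin n → ℝ} {i : Fin n} (hv : ∀ j : Fin n, (j : ℕ) = i + 1 → v j = 0) :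
    (A *ᵥ v) i = lam i * v i := by
  rw [mulVec, dotProduct, Finset.sum_eq_single i]
  · simp [hA]
  · intro j _ hji
    by_cases hj : (j : ℕ) = i + 1
    · simp [hv j hj]
    · simp [hA, hji, hj]
  · simp

variable {b : Fin n} {u : ℕ → ℝ} {x : ℕ → Fin n → ℝ}
  (hA : ∀ i j : Fin n,
    A i j = if j = i then lam i else if (j : ℕ) = (i : ℕ) + 1 then 1 else 0)
  (hdyn : ∀ t, x (t + 1) = A *ᵥ x t + u t • (Pi.single b 1 : Fin n → ℝ))
include hA hdyn

theorem trajectory_succ_apply {t : ℕ} {i : Fin n} (hib : i ≠ b)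
    (hv : ∀ j : Fin n, (j : ℕ) = i + 1 → x t j = 0) :
    x (t + 1) i = lam i * x t i := by
  simp [hdyn t, bidiagonal_mulVec_apply hA hv, hib]

theorem trajectory_apply_eq_zero (hx0 : ∀ i : Fin n, 0 < (i : ℕ) → x 0 i = 0) :
    ∀ (t : ℕ) (i : Fin n), 0 < (i : ℕ) → (i : ℕ) + t ≤ b → x t i = 0 := by
  intro t
  induction t with
  | zero => exact fun i hi _ => hx0 i hi
  | succ t ih =>
    intro i hi hib
    have hne : i ≠ b := fun h => by subst h; omega
    rw [trajectory_succ_apply hA hdyn hne fun j hj => ih j (by omega) (by omega), ih i hi (by omega),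
      mul_zero]

theorem trajectory_apply_of_val_eq_zero (hx0 : ∀ i : Fin n, 0 < (i : ℕ) → x 0 i = 0)
    {i₀ : Fin n} (hi₀ : (i₀ : ℕ) = 0) : ∀ t : ℕ, t ≤ (b : ℕ) → x t i₀ = lam i₀ ^ t * x 0 i₀ := by
  intro t
  induction t with
  | zero => simp
  | succ t ih =>
    intro ht
    have hne : i₀ ≠ b := fun h => by subst h; omega
    rw [trajectory_succ_apply hA hdyn hne
        fun j hj => trajectory_apply_eq_zero hA hdyn hx0 t j (by omega) (by omega),
      ih (by omega), pow_succ']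
    ring

end Bidiagonal

/-- For the upper-bidiagonal motivating example, no input can affect the first state
coordinate during the first `n - 1` steps: `e₁ᵀ x_t = λ₁ ^ t` for `0 ≤ t < n`. -/
theorem stmt19 (n : ℕ) (hn : 0 < n) (lam : Fin n → ℝ)
    (A : Matrix (Fin n) (Fin n) ℝ)
    (hA : ∀ i j : Fin n,
      A i j = if j = i then lam i else if (j : ℕ) = (i : ℕ) + 1 then 1 else 0)
    (u : ℕ → ℝ) (x : ℕ → Fin n → ℝ)
    (hx0 : x 0 = (Pi.single (⟨0, hn⟩ : Fin n) 1 : Fin n → ℝ))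
    (hdyn : ∀ t, x (t + 1) =
      A.mulVec (x t) + u t • (Pi.single (⟨n - 1, by omega⟩ : Fin n) 1 : Fin n → ℝ)) :
    ∀ t, t < n → x t ⟨0, hn⟩ = lam ⟨0, hn⟩ ^ t := by
  have hx0_supp : ∀ i : Fin n, 0 < (i : ℕ) → x 0 i = 0 := fun i hi => by
    rw [hx0, Pi.single_apply, if_neg (fun h => by subst h; simp at hi)]
  intro t ht
  rw [trajectory_apply_of_val_eq_zero hA hdyn hx0_supp rfl t (by simp; omega), hx0,
    Pi.single_eq_same, mul_one]
end
end
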